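/- Let (Ω, P) be a probability space with events B (membership in group g), and for a hypothesis h and value v define p₁ = P[h=v, y=1 | B], p₂ = P[h=v | B], and empirical counterparts p̃₁, p̃₂ computed from a sample of points in B. If |p̃₁ − p₁| ≤ ψε/3 and |p̃₂ − p₂| ≤ ψε/3 hold for all hypotheses h in a class H, all groups g, and all values v, then for every h, g, v with P[B] ≥ γ and p₂ ≥ ψ, the true and empirical calibration errors satisfy |c(h,g,{v}) − ĉ(h,g,{v},S)| ≤ ε, where c(h,g,{v}) = p₁/p₂ and ĉ(h,g,{v},S) = p̃₁/p̃₂. -/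

import Mathlib

/-!
Writing `a / b - a' / b' = (a (b' - b) + b (a - a')) / (b b')` and using `|a| ≤ b`, an additive
error `δ` in numerator and denominator gives an error of at most `2 δ / b'` in the ratio. With
`δ = ψ ε / 3` and `b ≥ ψ`, the empirical denominator satisfies `b' ≥ 2 ψ / 3`, so `2 δ / b' ≤ ε`.
-/

lemma abs_div_sub_div_le_of_abs_sub_le {a b a' b' δ : ℝ} (hab : |a| ≤ b) (hb : 0 < b)
    (hb' : 0 < b') (ha' : |a' - a| ≤ δ) (hb'b : |b' - b| ≤ δ) :
    |a / b - a' / b'| ≤ 2 * δ / b' := by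
  have hnum : |a * b' - b * a'| ≤ b * (2 * δ) :=
    calc |a * b' - b * a'| = |a * (b' - b) + b * -(a' - a)| := by ring_nf
      _ ≤ |a| * |b' - b| + b * |a' - a| := by
          grw [abs_add_le, abs_mul, abs_mul, abs_neg, abs_of_pos hb]
      _ ≤ b * δ + b * δ := by gcongr
      _ = b * (2 * δ) := by ring
  rw [div_sub_div a a' hb.ne' hb'.ne', abs_div, abs_of_pos (mul_pos hb hb'),
    div_le_div_iff₀ (mul_pos hb hb') hb']
  nlinarith

lemma abs_div_sub_div_le_of_abs_sub_le_mul {a b a' b' ψ ε : ℝ} (hψ : 0 < ψ) (hε₀ : 0 ≤ ε)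
    (hε₁ : ε ≤ 1) (hab : |a| ≤ b) (hψb : ψ ≤ b) (ha' : |a' - a| ≤ ψ * ε / 3)
    (hb'b : |b' - b| ≤ ψ * ε / 3) :
    |a / b - a' / b'| ≤ ε := by
  have hψε : ψ * ε ≤ ψ := mul_le_of_le_one_right hψ.le hε₁
  have hb' : 2 * ψ / 3 ≤ b' := by linarith [(abs_le.mp hb'b).1]
  calc |a / b - a' / b'| ≤ 2 * (ψ * ε / 3) / b' :=
        abs_div_sub_div_le_of_abs_sub_le hab (by linarith) (by linarith) ha' hb'b
    _ ≤ 2 * (ψ * ε / 3) / (2 * ψ / 3) := by gcongr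
    _ = ε := by field_simp

theorem multicalibration_from_pointwise_estimates_general
    {H G V : Type*}
    (ψ ε γ : ℝ) (hψ : ψ ∈ Set.Ioo (0:ℝ) 1) (hε : ε ∈ Set.Ioo (0:ℝ) 1)
    (PB : G → ℝ)
    (p₁ p₂ pt₁ pt₂ : H → G → V → ℝ)
    (hp₁ : ∀ h g v, p₁ h g v ∈ Set.Icc (0:ℝ) 1)
    (hle : ∀ h g v, p₁ h g v ≤ p₂ h g v)
    (hest₁ : ∀ h g v, |pt₁ h g v - p₁ h g v| ≤ ψ * ε / 3)
    (hest₂ : ∀ h g v, |pt₂ h g v - p₂ h g v| ≤ ψ * ε / 3) :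
    ∀ h g v, γ ≤ PB g → ψ ≤ p₂ h g v →
      |p₁ h g v / p₂ h g v - pt₁ h g v / pt₂ h g v| ≤ ε := by
  intro h g v _ hψp₂
  have hp₁_abs : |p₁ h g v| ≤ p₂ h g v := by
    rw [abs_of_nonneg (hp₁ h g v).1]
    exact hle h g v
  exact abs_div_sub_div_le_of_abs_sub_le_mul hψ.1 hε.1.le hε.2.le hp₁_abs hψp₂
    (hest₁ h g v) (hest₂ h g v)

theorem multicalibration_from_pointwise_estimates
    {H G V : Type*}
    (ψ ε γ : ℝ) (hψ : ψ ∈ Set.Ioo (0:ℝ) 1) (hε : ε ∈ Set.Ioo (0:ℝ) 1)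
    (hγ : γ ∈ Set.Ioo (0:ℝ) 1)
    (PB : G → ℝ)
    (p₁ p₂ pt₁ pt₂ : H → G → V → ℝ)
    (hp₁ : ∀ h g v, p₁ h g v ∈ Set.Icc (0:ℝ) 1)
    (hp₂ : ∀ h g v, p₂ h g v ∈ Set.Icc (0:ℝ) 1)
    (hpt₁ : ∀ h g v, pt₁ h g v ∈ Set.Icc (0:ℝ) 1)
    (hpt₂ : ∀ h g v, pt₂ h g v ∈ Set.Icc (0:ℝ) 1)
    (hle : ∀ h g v, p₁ h g v ≤ p₂ h g v)
    (htle : ∀ h g v, pt₁ h g v ≤ pt₂ h g v)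
    (hpt₂pos : ∀ h g v, 0 < pt₂ h g v)
    (hest₁ : ∀ h g v, |pt₁ h g v - p₁ h g v| ≤ ψ * ε / 3)
    (hest₂ : ∀ h g v, |pt₂ h g v - p₂ h g v| ≤ ψ * ε / 3) :
    ∀ h g v, γ ≤ PB g → ψ ≤ p₂ h g v →
      |p₁ h g v / p₂ h g v - pt₁ h g v / pt₂ h g v| ≤ ε :=
  multicalibration_from_pointwise_estimates_general ψ ε γ hψ hε PB p₁ p₂ pt₁ pt₂ hp₁ hle hest₁ hest₂
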